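/- arXiv:1306.1428 — 7 statements merged into one kernel-verified Lean document; each statement's English description precedes it below -/
import Mathlib

section
/- Let B be a finite nonempty set of branches and S a finite nonempty set of switches of a combinatorial train track with incidence matrix L : S × B → ℤ, and write m = |S|. If the train track is not recurrent (i.e., it admits no transverse measure that is strictly positive on every branch), then every function u : B → ℝ with u(b) > 0 for all b ∈ B satisfies max_{s ∈ S} |(L·u)(s)| ≥ (min_{b ∈ B} u(b)) / m, where (L·u)(s) = Σ_{b ∈ B} L(s,b)·u(b). (This is the combinatorial content of Theorem 4.3; for train tracks on S_{g,p} one has m ≤ 12g+4p−12.) -/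
/-!
By Stiemke's alternative (Hahn–Banach separation of the row space of `L` from the standard
simplex), non-recurrence yields a weighting `y` of the switches with `yᵀL ≥ 0` and
`(yᵀL) b > 0` for some branch `b`. A column of `L` just adds up the signed values of `y` at the
two ends of its branch, so rounding `y` into `{-1, 0, 1}` by an odd monotone threshold map keeps
`yᵀL ≥ 0`, and a well chosen threshold makes `(yᵀL) b ≥ 1`. Then
`min u ≤ u b ≤ yᵀ L u ≤ ∑ₛ |(L u) s| ≤ |S| · maxₛ |(L u) s|`.
-/

open Finset Matrix

theorem Submodule.exists_pos_forall_dotProduct_eq_zero_of_disjoint_stdSimplex {ι : Type*}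
    [Fintype ι] (W : Submodule ℝ (ι → ℝ)) (hW : Disjoint (W : Set (ι → ℝ)) (stdSimplex ℝ ι)) :
    ∃ μ : ι → ℝ, (∀ i, 0 < μ i) ∧ ∀ w ∈ W, w ⬝ᵥ μ = 0 := by
  classical
  obtain ⟨f, c, d, hfW, hcd, hfΔ⟩ := geometric_hahn_banach_closed_compact W.convex
    W.closed_of_finiteDimensional (convex_stdSimplex ℝ ι) (isCompact_stdSimplex ℝ ι) hW
  -- a linear functional bounded above on a subspace vanishes on it
  have hf : ∀ w ∈ W, f w = 0 := by
    intro w hw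
    by_contra hne
    have := hfW (((c + 1) / f w) • w) (W.smul_mem _ hw)
    rw [map_smul, smul_eq_mul, div_mul_cancel₀ _ hne] at this
    linarith
  have hd : 0 < d := by linarith [hfW 0 W.zero_mem, map_zero f]
  refine ⟨fun i => f (Pi.single i 1), fun i => hd.trans (hfΔ _ (single_mem_stdSimplex ℝ i)),
    fun w hw => ?_⟩
  rw [← hf w hw]
  conv_rhs => rw [pi_eq_sum_univ' w]
  simp [dotProduct]

theorem Matrix.exists_vecMul_nonneg_of_not_exists_pos_mulVec_eq_zero {m n : Type*}
    [Fintype m] [Fintype n] (A : Matrix m n ℝ)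
    (h : ¬ ∃ μ : n → ℝ, (∀ j, 0 < μ j) ∧ A *ᵥ μ = 0) :
    ∃ y : m → ℝ, 0 ≤ y ᵥ* A ∧ ∃ j, 0 < (y ᵥ* A) j := by
  classical
  by_contra! hA
  refine h ?_
  have hdisj : Disjoint (LinearMap.range A.vecMulLinear : Set (n → ℝ)) (stdSimplex ℝ n) := by
    refine Set.disjoint_left.2 ?_
    rintro _ ⟨y, rfl⟩ ⟨hnonneg, hsum⟩
    have hzero : y ᵥ* A = 0 := funext fun j => le_antisymm (hA y hnonneg j) (hnonneg j)
    simp [hzero] at hsum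
  obtain ⟨μ, hμ, horth⟩ :=
    Submodule.exists_pos_forall_dotProduct_eq_zero_of_disjoint_stdSimplex _ hdisj
  refine ⟨μ, hμ, funext fun i => ?_⟩
  have := horth _ ⟨Pi.single i 1, rfl⟩
  rwa [vecMulLinear_apply, single_one_vecMul] at this

theorem Matrix.le_sum_abs_mulVec {m n : Type*} [Fintype m] [Fintype n] (A : Matrix m n ℝ)
    {z : m → ℝ} (hz : ∀ i, |z i| ≤ 1) (hzA : 0 ≤ z ᵥ* A) {j : n} (hj : 1 ≤ (z ᵥ* A) j)
    {u : n → ℝ} (hu : 0 ≤ u) : u j ≤ ∑ i, |(A *ᵥ u) i| :=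
  calc u j ≤ (z ᵥ* A) j * u j := le_mul_of_one_le_left (hu j) hj
    _ ≤ (z ᵥ* A) ⬝ᵥ u :=
      single_le_sum (f := fun k => (z ᵥ* A) k * u k) (fun k _ => mul_nonneg (hzA k) (hu k))
        (mem_univ j)
    _ = z ⬝ᵥ (A *ᵥ u) := (dotProduct_mulVec z A u).symm
    _ ≤ ∑ i, |(A *ᵥ u) i| := sum_le_sum fun i _ => (le_abs_self _).trans <| by
      rw [abs_mul]; exact mul_le_of_le_one_left (abs_nonneg _) (hz i)

noncomputable def roundAt (t x : ℝ) : ℝ := if t < x then 1 else if x < -t then -1 else 0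

theorem abs_roundAt_le_one (t x : ℝ) : |roundAt t x| ≤ 1 := by
  unfold roundAt; split_ifs <;> norm_num

theorem roundAt_neg {t : ℝ} (ht : 0 ≤ t) (x : ℝ) : roundAt t (-x) = -roundAt t x := by
  unfold roundAt; split_ifs <;> linarith

theorem roundAt_mono (t : ℝ) : Monotone (roundAt t) := by
  intro x y hxy; unfold roundAt; split_ifs <;> linarith

theorem roundAt_add_roundAt_nonneg {t p q : ℝ} (ht : 0 ≤ t) (hpq : 0 ≤ p + q) :
    0 ≤ roundAt t p + roundAt t q := by
  have := roundAt_mono t (show -q ≤ p by linarith)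
  rw [roundAt_neg ht] at this
  linarith

theorem one_le_roundAt_add_roundAt_of_le {p q : ℝ} (hqp : q ≤ p) (hpq : 0 < p + q) :
    1 ≤ roundAt (max 0 (-q)) p + roundAt (max 0 (-q)) q := by
  have hp : max 0 (-q) < p := max_lt (by linarith) (by linarith)
  have hq : -max 0 (-q) ≤ q := neg_le.1 (le_max_right 0 (-q))
  unfold roundAt; split_ifs <;> linarith

theorem exists_one_le_roundAt_add_roundAt {p q : ℝ} (hpq : 0 < p + q) :
    ∃ t, 0 ≤ t ∧ 1 ≤ roundAt t p + roundAt t q := by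
  rcases le_total q p with h | h
  · exact ⟨_, le_max_left _ _, one_le_roundAt_add_roundAt_of_le h hpq⟩
  · exact ⟨_, le_max_left _ _, add_comm (roundAt _ p) _ ▸
      one_le_roundAt_add_roundAt_of_le h (by linarith)⟩

namespace TrainTrack

variable {B S : Type*} [DecidableEq S] (R : Type*) [Ring R]
  (att : B × Bool → S) (side : B × Bool → Bool)

def incidence : Matrix S B R :=
  of fun s b => ∑ e : Bool, if att (b, e) = s then (if side (b, e) then 1 else -1) else 0

variable {R att side}

theorem vecMul_incidence_apply [Fintype S] (z : S → R) (b : B) :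
    (z ᵥ* incidence R att side) b =
      ∑ e : Bool, if side (b, e) then z (att (b, e)) else -z (att (b, e)) := by
  simp only [vecMul, dotProduct, incidence, of_apply, mul_sum]
  rw [sum_comm]
  simp [mul_ite]

theorem vecMul_roundAt_incidence_apply [Fintype S] {t : ℝ} (ht : 0 ≤ t) (y : S → ℝ) (b : B) :
    ((fun s => roundAt t (y s)) ᵥ* incidence ℝ att side) b =
      ∑ e : Bool, roundAt t (if side (b, e) then y (att (b, e)) else -y (att (b, e))) := by
  rw [vecMul_incidence_apply]
  congr! 1 with e
  split_ifs <;> simp [roundAt_neg ht]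

theorem exists_abs_le_one_one_le_vecMul_incidence [Fintype S] {y : S → ℝ}
    (hy : 0 ≤ y ᵥ* incidence ℝ att side) {b : B} (hb : 0 < (y ᵥ* incidence ℝ att side) b) :
    ∃ z : S → ℝ, (∀ s, |z s| ≤ 1) ∧ 0 ≤ z ᵥ* incidence ℝ att side ∧
      1 ≤ (z ᵥ* incidence ℝ att side) b := by
  rw [vecMul_incidence_apply, Fintype.sum_bool] at hb
  obtain ⟨t, ht, hbt⟩ := exists_one_le_roundAt_add_roundAt hb
  refine ⟨fun s => roundAt t (y s), fun s => abs_roundAt_le_one t _, fun b' => ?_, ?_⟩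
  · have hyb' := hy b'
    rw [Pi.zero_apply, vecMul_incidence_apply, Fintype.sum_bool] at hyb'
    rw [Pi.zero_apply, vecMul_roundAt_incidence_apply ht, Fintype.sum_bool]
    exact roundAt_add_roundAt_nonneg ht hyb'
  · rwa [vecMul_roundAt_incidence_apply ht, Fintype.sum_bool]

end TrainTrack

open TrainTrack in
/-- Theorem 4.3, combinatorial content.
A combinatorial train track has a finite nonempty branch set `B` and a finite
nonempty switch set `S`; each branch `b` has two ends `(b, false)` and `(b, true)`,
the attaching map `att` assigns to each end a switch, and the side map `side`
assigns to each end a side (`true` = "in", `false` = "out").  The incidence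
matrix is `L s b = (# ends of b at s with side in) − (# ends of b at s with side out)`.
If the track is not recurrent, i.e. it admits no transverse measure (nonnegative
vector in the kernel of `L`) which is strictly positive on every branch, then for
every strictly positive `u : B → ℝ`,
`max_{s ∈ S} |(L·u)(s)| ≥ (min_{b ∈ B} u b) / |S|`. -/
theorem stmt_0 {B S : Type} [Fintype B] [Fintype S] [Nonempty B] [Nonempty S]
    [DecidableEq S]
    (att : B × Bool → S) (side : B × Bool → Bool)
    (L : S → B → ℤ)
    (hL : ∀ s b, L s b =
      ∑ e : Bool, (if att (b, e) = s then (if side (b, e) then (1 : ℤ) else -1) else 0))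
    (hnonrec : ¬ ∃ μ : B → ℝ,
      (∀ b, 0 ≤ μ b) ∧ (∀ s, ∑ b, (L s b : ℝ) * μ b = 0) ∧ (∀ b, 0 < μ b))
    (u : B → ℝ) (hu : ∀ b, 0 < u b) :
    (Finset.univ.inf' Finset.univ_nonempty u) / (Fintype.card S : ℝ) ≤
      Finset.univ.sup' Finset.univ_nonempty (fun s => |∑ b, (L s b : ℝ) * u b|) := by
  have hLA : ∀ s b, (L s b : ℝ) = incidence ℝ att side s b := fun s b => by
    rw [hL, incidence, of_apply]
    push_cast
    rfl
  simp only [hLA] at hnonrec ⊢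
  set A : Matrix S B ℝ := incidence ℝ att side
  obtain ⟨y, hy, b, hb⟩ := A.exists_vecMul_nonneg_of_not_exists_pos_mulVec_eq_zero
    fun ⟨μ, hμ, hAμ⟩ => hnonrec ⟨μ, fun b => (hμ b).le, congrFun hAμ, hμ⟩
  obtain ⟨z, hz, hzA, hzb⟩ := exists_abs_le_one_one_le_vecMul_incidence hy hb
  rw [div_le_iff₀ (by exact_mod_cast Fintype.card_pos)]
  calc univ.inf' univ_nonempty u ≤ u b := inf'_le u (mem_univ b)
    _ ≤ ∑ s, |(A *ᵥ u) s| := A.le_sum_abs_mulVec hz hzA hzb fun b => (hu b).le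
    _ ≤ Fintype.card S • univ.sup' univ_nonempty (fun s => |(A *ᵥ u) s|) :=
      sum_le_card_nsmul _ _ _ fun s _ => le_sup' (fun s => |(A *ᵥ u) s|) (mem_univ s)
    _ = _ := by rw [nsmul_eq_mul, mul_comm]; rfl
end

section
/- Let a combinatorial train track with branch set B, switch set S, and incidence matrix L : S × B → ℤ be given, and let b ∈ B be a branch that is contained in no closed train path. Then there exist a nonempty subset T ⊆ S and signs ε : T → {−1, +1} such that the vector V := Σ_{s ∈ T} ε(s)·L(s,·) ∈ ℤ^B has all coordinates ≥ 0 and satisfies V(b) ≥ 1; in particular V is a nonzero nonnegative vector in the row space of L. (Lemma 4.4: the reorientation of switches along the set Q of branches reachable from an end of b changes each affected row of L only by a sign, and the resulting sum of rows over the switches of Q is nonnegative and positive in the coordinate of b.) -/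
/-- A train path on a combinatorial train track with branch set `B`, switch set `S`,
attaching map `att` and side map `side`: a sequence of branches `bs 0, …, bs (k-1)`
(`k ≥ 1`) each traversed in the direction recorded by `ds` (the first end of the
`i`-th traversed branch is `(bs i, ds i)`, the second is `(bs i, !(ds i))`), such
that consecutive ends are attached at the same switch with opposite sides. -/
def IsTrainPath {B S : Type} (att : B × Bool → S) (side : B × Bool → Bool)
    (k : ℕ) (bs : ℕ → B) (ds : ℕ → Bool) : Prop :=
  1 ≤ k ∧ ∀ i, i + 1 < k →
    att (bs (i + 1), ds (i + 1)) = att (bs i, !(ds i)) ∧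
    side (bs (i + 1), ds (i + 1)) ≠ side (bs i, !(ds i))

/-- A closed train path: a train path whose final outgoing end and initial end are
attached at the same switch with opposite sides. -/
def IsClosedTrainPath {B S : Type} (att : B × Bool → S) (side : B × Bool → Bool)
    (k : ℕ) (bs : ℕ → B) (ds : ℕ → Bool) : Prop :=
  IsTrainPath att side k bs ds ∧
  att (bs 0, ds 0) = att (bs (k - 1), !(ds (k - 1))) ∧
  side (bs 0, ds 0) ≠ side (bs (k - 1), !(ds (k - 1)))

/-!
Let `R` be the set of directed branches reachable by train paths starting with `b` traversed in
a direction `d` for which `b` traversed backwards is not reachable (such a `d` exists,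
since otherwise the two traversals of `b` would close up to a closed train path through `b`).
No directed branch lies in `R` together with its reverse, so at each switch all branches of `R`
leave from the same side; signing the row of such a switch by that side, every end through which
`R` leaves contributes `+1` to the signed row sum `V`. An end contributing `-1` is entered from
`R`, so its branch lies in `R` and its other end contributes `+1`; hence `V ≥ 0`. At `b` the exit
end contributes `+1` and the entry end cannot contribute `-1`, since that would close a train
path through `b`.
-/

open Relation

namespace TrainTrack

variable {B S : Type} (att : B × Bool → S) (side : B × Bool → Bool)

/-- A directed branch `u : B × Bool` traverses `u.1` entering through the end `u`; it leaves
through `rev u`, which is also the same branch traversed backwards. -/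
def rev (u : B × Bool) : B × Bool := (u.1, !u.2)

@[simp]
lemma rev_rev (u : B × Bool) : rev (rev u) = u := by
  simp [rev]

def TrainStep (u v : B × Bool) : Prop :=
  att v = att (rev u) ∧ side v ≠ side (rev u)

def endSign (e : B × Bool) : ℤ := if side e then 1 else -1

def endWeight [DecidableEq S] (T : Finset S) (ε : S → ℤ) (e : B × Bool) : ℤ :=
  if att e ∈ T then ε (att e) * endSign side e else 0

open Classical in
noncomputable def exitSwitches [Fintype S] (R : Set (B × Bool)) : Finset S :=
  Finset.univ.filter fun s => ∃ u ∈ R, att (rev u) = s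

open Classical in
noncomputable def exitSign (R : Set (B × Bool)) (s : S) : ℤ :=
  if ∃ u ∈ R, att (rev u) = s ∧ side (rev u) = true then 1 else -1

variable {att side}

lemma TrainStep.rev {u v : B × Bool} (h : TrainStep att side u v) :
    TrainStep att side (rev v) (rev u) := by
  rw [TrainStep, rev_rev]
  exact ⟨h.1.symm, h.2.symm⟩

lemma reflTransGen_trainStep_rev {u v : B × Bool} (h : ReflTransGen (TrainStep att side) u v) :
    ReflTransGen (TrainStep att side) (rev v) (rev u) := by
  induction h with
  | refl => exact ReflTransGen.refl
  | tail _ hstep ih => exact ReflTransGen.head hstep.rev ih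

lemma exists_isTrainPath_of_reflTransGen {x u : B × Bool}
    (h : ReflTransGen (TrainStep att side) x u) :
    ∃ (k : ℕ) (p : ℕ → B × Bool),
      IsTrainPath att side k (fun i => (p i).1) (fun i => (p i).2) ∧ p 0 = x ∧ p (k - 1) = u := by
  induction h with
  | refl => exact ⟨1, fun _ => x, ⟨le_rfl, by omega⟩, rfl, rfl⟩
  | @tail w v _ hstep ih =>
    obtain ⟨k, p, ⟨hk, hp⟩, hp0, hpk⟩ := ih
    refine ⟨k + 1, fun i => if i < k then p i else v, ⟨by omega, fun i hi => ?_⟩,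
      by simp [hp0, show 0 < k by omega], by simp⟩
    by_cases hik : i + 1 < k
    · simpa [show i < k by omega, hik] using hp i hik
    · obtain rfl : i = k - 1 := by omega
      simpa [TrainStep, rev, show k - 1 < k by omega, show k - 1 + 1 = k by omega, hpk] using hstep

lemma not_trainStep_of_reflTransGen {c : B}
    (hc : ∀ (k : ℕ) (bs : ℕ → B) (ds : ℕ → Bool),
      IsClosedTrainPath att side k bs ds → ∀ i < k, bs i ≠ c)
    {d : Bool} {u : B × Bool} (h : ReflTransGen (TrainStep att side) (c, d) u) :
    ¬ TrainStep att side u (c, d) := by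
  intro hstep
  obtain ⟨k, p, hpath, hp0, hpk⟩ := exists_isTrainPath_of_reflTransGen h
  have hclosed : IsClosedTrainPath att side k (fun i => (p i).1) (fun i => (p i).2) :=
    ⟨hpath, by simpa [rev, hp0, hpk] using hstep.1, by simpa [rev, hp0, hpk] using hstep.2⟩
  exact hc k _ _ hclosed 0 hpath.1 (by simp [hp0])

lemma not_reflTransGen_rev_of_reflTransGen {x : B × Bool}
    (hx : ∀ u, ReflTransGen (TrainStep att side) x u → ¬ TrainStep att side u x)
    (h : ReflTransGen (TrainStep att side) x (rev x)) :
    ¬ ReflTransGen (TrainStep att side) (rev x) x := by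
  intro h'
  rcases h'.cases_tail with hx' | ⟨u, hu, hstep⟩
  · simp [rev, Prod.ext_iff] at hx'
  · exact hx u (h.trans hu) hstep

section SignedRowSum

variable [DecidableEq S]

lemma sum_mul_eq_sum_endWeight {L : S → B → ℤ}
    (hL : ∀ s c, L s c = ∑ e : Bool, if att (c, e) = s then endSign side (c, e) else 0)
    (T : Finset S) (ε : S → ℤ) (c : B) :
    ∑ s ∈ T, ε s * L s c = ∑ e : Bool, endWeight att side T ε (c, e) := by
  simp_rw [hL, Finset.mul_sum, mul_ite, mul_zero]
  rw [Finset.sum_comm]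
  refine Finset.sum_congr rfl fun e _ => ?_
  rw [Finset.sum_ite_eq, endWeight]

lemma neg_one_le_endWeight {T : Finset S} {ε : S → ℤ} (hε : ∀ s, ε s = 1 ∨ ε s = -1)
    (e : B × Bool) : -1 ≤ endWeight att side T ε e := by
  unfold endWeight endSign
  rcases hε (att e) with h | h <;> split_ifs <;> simp [h]

end SignedRowSum

section ReachableSet

variable {R : Set (B × Bool)}

lemma mem_exitSwitches [Fintype S] {s : S} :
    s ∈ exitSwitches att R ↔ ∃ u ∈ R, att (rev u) = s := by
  simp [exitSwitches]

lemma exitSign_eq_one_or_neg_one (s : S) :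
    exitSign att side R s = 1 ∨ exitSign att side R s = -1 := by
  unfold exitSign
  split_ifs <;> simp

lemma side_rev_eq_of_att_rev_eq (hclosed : ∀ u v, u ∈ R → TrainStep att side u v → v ∈ R)
    (hrev : ∀ u ∈ R, rev u ∉ R) {u v : B × Bool} (hu : u ∈ R) (hv : v ∈ R)
    (h : att (rev u) = att (rev v)) : side (rev u) = side (rev v) := by
  by_contra hne
  exact hrev v hv (hclosed u _ hu ⟨h.symm, Ne.symm hne⟩)

lemma exitSign_att_rev
    (hcons : ∀ u v, u ∈ R → v ∈ R → att (rev u) = att (rev v) → side (rev u) = side (rev v))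
    {u : B × Bool} (hu : u ∈ R) :
    exitSign att side R (att (rev u)) = endSign side (rev u) := by
  unfold exitSign endSign
  by_cases hs : side (rev u) = true
  · rw [if_pos ⟨u, hu, rfl, hs⟩, if_pos hs]
  · rw [if_neg hs, if_neg]
    rintro ⟨v, hv, hatt, hv'⟩
    exact hs (hv' ▸ hcons u v hu hv hatt.symm)

lemma endWeight_rev_of_mem [Fintype S] [DecidableEq S]
    (hcons : ∀ u v, u ∈ R → v ∈ R → att (rev u) = att (rev v) → side (rev u) = side (rev v))
    {u : B × Bool} (hu : u ∈ R) :
    endWeight att side (exitSwitches att R) (exitSign att side R) (rev u) = 1 := by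
  rw [endWeight, if_pos (mem_exitSwitches.2 ⟨u, hu, rfl⟩), exitSign_att_rev hcons hu, endSign]
  split_ifs <;> norm_num

lemma exists_trainStep_of_endWeight_neg [Fintype S] [DecidableEq S] {e : B × Bool}
    (h : endWeight att side (exitSwitches att R) (exitSign att side R) e < 0) :
    ∃ u ∈ R, TrainStep att side u e := by
  unfold endWeight at h
  split_ifs at h with he
  · obtain ⟨u, hu, hatt⟩ := mem_exitSwitches.1 he
    unfold exitSign endSign at h
    split_ifs at h with hsign hside hside <;> norm_num at h
    · obtain ⟨v, hv, hvatt, hvside⟩ := hsign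
      exact ⟨v, hv, hvatt.symm, by rw [hvside]; simpa using hside⟩
    · exact ⟨u, hu, hatt.symm, fun heq => hsign ⟨u, hu, hatt, by rw [← heq]; exact hside⟩⟩
  · simp at h

lemma sum_endWeight_nonneg [Fintype S] [DecidableEq S]
    (hclosed : ∀ u v, u ∈ R → TrainStep att side u v → v ∈ R) (hrev : ∀ u ∈ R, rev u ∉ R)
    (c : B) :
    0 ≤ ∑ e : Bool, endWeight att side (exitSwitches att R) (exitSign att side R) (c, e) := by
  set w := endWeight att side (exitSwitches att R) (exitSign att side R)
  have hpos : ∀ e, w (c, e) < 0 → w (c, !e) = 1 := by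
    intro e he
    obtain ⟨u, hu, hstep⟩ := exists_trainStep_of_endWeight_neg he
    exact endWeight_rev_of_mem (fun _ _ => side_rev_eq_of_att_rev_eq hclosed hrev)
      (hclosed u _ hu hstep)
  have hge : ∀ e, -1 ≤ w e := neg_one_le_endWeight exitSign_eq_one_or_neg_one
  have htrue := hpos true
  have hfalse := hpos false
  simp only [Bool.not_true, Bool.not_false] at htrue hfalse
  rw [Fintype.sum_bool]
  have := hge (c, true)
  have := hge (c, false)
  omega

lemma one_le_sum_endWeight [Fintype S] [DecidableEq S]
    (hclosed : ∀ u v, u ∈ R → TrainStep att side u v → v ∈ R) (hrev : ∀ u ∈ R, rev u ∉ R)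
    {c : B} {d : Bool} (hc : (c, d) ∈ R) (hin : ∀ u ∈ R, ¬ TrainStep att side u (c, d)) :
    1 ≤ ∑ e : Bool, endWeight att side (exitSwitches att R) (exitSign att side R) (c, e) := by
  have hexit := endWeight_rev_of_mem (fun _ _ => side_rev_eq_of_att_rev_eq hclosed hrev) hc
  have hentry : 0 ≤ endWeight att side (exitSwitches att R) (exitSign att side R) (c, d) :=
    not_lt.1 fun h => (exists_trainStep_of_endWeight_neg h).elim fun u ⟨hu, hstep⟩ => hin u hu hstep
  cases d <;> simp only [rev, Fintype.sum_bool, Bool.not_true, Bool.not_false] at hexit ⊢ <;> omega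

end ReachableSet

end TrainTrack

open TrainTrack

theorem stmt_2_general {B S : Type} [Fintype S] [DecidableEq S]
    (att : B × Bool → S) (side : B × Bool → Bool)
    (L : S → B → ℤ)
    (hL : ∀ s b, L s b =
      ∑ e : Bool, (if att (b, e) = s then (if side (b, e) then (1 : ℤ) else -1) else 0))
    (b : B)
    (hb : ∀ (k : ℕ) (bs : ℕ → B) (ds : ℕ → Bool),
      IsClosedTrainPath att side k bs ds → ∀ i < k, bs i ≠ b) :
    ∃ T : Finset S, T.Nonempty ∧
      ∃ ε : S → ℤ, (∀ s ∈ T, ε s = 1 ∨ ε s = -1) ∧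
        (∀ b' : B, 0 ≤ ∑ s ∈ T, ε s * L s b') ∧
        1 ≤ ∑ s ∈ T, ε s * L s b := by
  have hacyclic : ∀ d, ∀ u, ReflTransGen (TrainStep att side) (b, d) u →
      ¬ TrainStep att side u (b, d) := fun _ _ => not_trainStep_of_reflTransGen hb
  obtain ⟨d, hd⟩ : ∃ d, ¬ ReflTransGen (TrainStep att side) (b, d) (rev (b, d)) := by
    by_cases h : ReflTransGen (TrainStep att side) (b, false) (rev (b, false))
    · exact ⟨true, not_reflTransGen_rev_of_reflTransGen (hacyclic false) h⟩
    · exact ⟨false, h⟩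
  set R : Set (B × Bool) := {u | ReflTransGen (TrainStep att side) (b, d) u}
  have hclosed : ∀ u v, u ∈ R → TrainStep att side u v → v ∈ R :=
    fun _ _ hu hstep => hu.tail hstep
  have hrev : ∀ u ∈ R, rev u ∉ R := fun u hu hu' =>
    hd (hu'.trans (reflTransGen_trainStep_rev hu))
  have hbR : (b, d) ∈ R := ReflTransGen.refl
  refine ⟨exitSwitches att R, ⟨_, mem_exitSwitches.2 ⟨_, hbR, rfl⟩⟩, exitSign att side R,
    fun s _ => exitSign_eq_one_or_neg_one s, fun c => ?_, ?_⟩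
  · rw [sum_mul_eq_sum_endWeight hL]
    exact sum_endWeight_nonneg hclosed hrev c
  · rw [sum_mul_eq_sum_endWeight hL]
    exact one_le_sum_endWeight hclosed hrev hbR (hacyclic d)

/-- Lemma 4.4.
If `b` is a branch of a combinatorial train track that is contained in no closed
train path, then there exist a nonempty set `T` of switches and signs
`ε : T → {−1, +1}` such that `V := Σ_{s ∈ T} ε s • L s` (a signed sum of rows of
the incidence matrix `L`) has all coordinates nonnegative and satisfies
`V b ≥ 1`; in particular `V` is a nonzero nonnegative vector in the row space
of `L`. -/
theorem stmt_2 {B S : Type} [Fintype B] [Fintype S] [DecidableEq S]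
    (att : B × Bool → S) (side : B × Bool → Bool)
    (L : S → B → ℤ)
    (hL : ∀ s b, L s b =
      ∑ e : Bool, (if att (b, e) = s then (if side (b, e) then (1 : ℤ) else -1) else 0))
    (b : B)
    (hb : ∀ (k : ℕ) (bs : ℕ → B) (ds : ℕ → Bool),
      IsClosedTrainPath att side k bs ds → ∀ i < k, bs i ≠ b) :
    ∃ T : Finset S, T.Nonempty ∧
      ∃ ε : S → ℤ, (∀ s ∈ T, ε s = 1 ∨ ε s = -1) ∧
        (∀ b' : B, 0 ≤ ∑ s ∈ T, ε s * L s b') ∧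
        1 ≤ ∑ s ∈ T, ε s * L s b :=
  stmt_2_general att side L hL b hb
end

section
/- Let a combinatorial train track be given and let b be a branch, with ends ε₁ = (b,0) and ε₂ = (b,1) attached at switches s₁ and s₂ respectively. For i ∈ {1,2}, say a train path emanates from the end εᵢ of b if its first branch-end e₁ is attached at sᵢ with side opposite to the side of εᵢ, and it never traverses b; call the family of all such train paths unidirectional if any two traversals of a common branch e, by one member or by two members of the family, use the same direction of traversal (the same ordered pair of ends of e). If b is contained in no closed train path, then for at least one i ∈ {1,2} the family of train paths emanating from the end εᵢ of b is unidirectional. (Lemma 4.3: otherwise two loops, one through each end of b, could be concatenated across b to produce a closed train path containing b.) -/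
/-- A train path emanates from the end `(b, e)` of the branch `b` if its first
branch-end is attached at the same switch as `(b, e)` with opposite side, and it
never traverses `b`. -/
def EmanatesFrom {B S : Type} (att : B × Bool → S) (side : B × Bool → Bool)
    (b : B) (e : Bool) (k : ℕ) (bs : ℕ → B) (ds : ℕ → Bool) : Prop :=
  IsTrainPath att side k bs ds ∧
  att (bs 0, ds 0) = att (b, e) ∧
  side (bs 0, ds 0) ≠ side (b, e) ∧
  ∀ i < k, bs i ≠ b

section Sequences

variable {α : Type*}

def consSeq (a : α) (f : ℕ → α) : ℕ → α
  | 0 => a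
  | j + 1 => f j

/-- Concatenation of the first `k` terms of `f` with `g`, identifying `f (k - 1)` with `g 0`. -/
def overlapAppend (k : ℕ) (f g : ℕ → α) : ℕ → α :=
  fun j => if j < k then f j else g (j + 1 - k)

theorem overlapAppend_of_lt {k j : ℕ} {f g : ℕ → α} (h : j < k) : overlapAppend k f g j = f j :=
  if_pos h

theorem overlapAppend_of_le {k j : ℕ} {f g : ℕ → α} (h : k ≤ j) :
    overlapAppend k f g j = g (j + 1 - k) :=
  if_neg (Nat.not_lt.mpr h)

end Sequences

variable {B S : Type} {att : B × Bool → S} {side : B × Bool → Bool}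
  {k k' : ℕ} {bs bs' : ℕ → B} {ds ds' : ℕ → Bool}

namespace IsTrainPath

theorem take (h : IsTrainPath att side k bs ds) {n : ℕ} (hn : 1 ≤ n) (hnk : n ≤ k) :
    IsTrainPath att side n bs ds :=
  ⟨hn, fun i hi => h.2 i (by omega)⟩

theorem reverse (h : IsTrainPath att side k bs ds) :
    IsTrainPath att side k (fun j => bs (k - 1 - j)) (fun j => !ds (k - 1 - j)) := by
  refine ⟨h.1, fun j hj => ?_⟩
  obtain ⟨hatt, hside⟩ := h.2 (k - 2 - j) (by omega)
  rw [show k - 2 - j + 1 = k - 1 - j by omega] at hatt hside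
  simp only [Bool.not_not, show k - 1 - (j + 1) = k - 2 - j by omega]
  exact ⟨hatt.symm, hside.symm⟩

theorem overlapAppend (h : IsTrainPath att side k bs ds) (h' : IsTrainPath att side k' bs' ds')
    (hb : bs (k - 1) = bs' 0) (hd : ds (k - 1) = ds' 0) :
    IsTrainPath att side (k + k' - 1) (overlapAppend k bs bs') (overlapAppend k ds ds') := by
  obtain ⟨hk, hstep⟩ := h
  obtain ⟨hk', hstep'⟩ := h'
  refine ⟨by omega, fun j hj => ?_⟩
  simp only [_root_.overlapAppend]
  rcases lt_trichotomy (j + 1) k with hjk | rfl | hjk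
  · simpa [hjk, show j < k by omega] using hstep j hjk
  · rw [Nat.add_sub_cancel] at hb hd
    simpa [hb, hd] using hstep' 0 (by omega)
  · simpa [show ¬ j < k by omega, show ¬ j + 1 < k by omega,
      show j + 1 + 1 - k = j + 1 - k + 1 by omega] using hstep' (j + 1 - k) (by omega)

theorem isClosedTrainPath_of_repeat (h : IsTrainPath att side (k + 1) bs ds) (hk : 1 ≤ k)
    (hb : bs k = bs 0) (hd : ds k = ds 0) : IsClosedTrainPath att side k bs ds := by
  obtain ⟨hatt, hside⟩ := h.2 (k - 1) (by omega)
  rw [show k - 1 + 1 = k by omega, hb, hd] at hatt hside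
  exact ⟨h.take hk (by omega), hatt, hside⟩

end IsTrainPath

namespace EmanatesFrom

variable {b : B} {e : Bool}

theorem isTrainPath_consSeq (h : EmanatesFrom att side b e k bs ds) :
    IsTrainPath att side (k + 1) (consSeq b bs) (consSeq (!e) ds) := by
  obtain ⟨⟨_, hstep⟩, hatt, hside, -⟩ := h
  refine ⟨by omega, fun j hj => ?_⟩
  cases j with
  | zero => simpa [consSeq] using ⟨hatt, hside⟩
  | succ j => exact hstep j (by omega)

theorem exists_loop (hP : EmanatesFrom att side b e k bs ds)
    (hQ : EmanatesFrom att side b e k' bs' ds') {i i' : ℕ} (hi : i < k) (hi' : i' < k')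
    (hb : bs i = bs' i') (hd : ds i ≠ ds' i') :
    ∃ m cs fs, IsTrainPath att side (m + 2) cs fs ∧
      cs 0 = b ∧ fs 0 = !e ∧ cs (m + 1) = b ∧ fs (m + 1) = e := by
  have hout := hP.isTrainPath_consSeq.take (n := i + 2) (by omega) (by omega)
  have hback := (hQ.isTrainPath_consSeq.take (n := i' + 2) (by omega) (by omega)).reverse
  have hloop := hout.overlapAppend hback (by simpa [consSeq] using hb)
    (by simpa [consSeq, Bool.eq_not_iff] using hd)
  rw [show i + 2 + (i' + 2) - 1 = i + i' + 1 + 2 by omega] at hloop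
  refine ⟨i + i' + 1, _, _, hloop, rfl, rfl, ?_, ?_⟩ <;>
    simp only [overlapAppend_of_le (show i + 2 ≤ i + i' + 1 + 1 by omega),
      show i + i' + 1 + 1 + 1 - (i + 2) = i' + 1 by omega,
      show i' + 2 - 1 - (i' + 1) = 0 by omega, consSeq, Bool.not_not]

end EmanatesFrom

/-- Lemma 4.3.
If the branch `b` is contained in no closed train path, then for at least one of
the two ends `(b, e)` of `b`, the family of train paths emanating from `(b, e)`
is unidirectional: any two traversals of a common branch (by one member or by
two members of the family) use the same direction of traversal. -/
theorem stmt_3 {B S : Type} (att : B × Bool → S) (side : B × Bool → Bool) (b : B)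
    (hb : ∀ (k : ℕ) (bs : ℕ → B) (ds : ℕ → Bool),
      IsClosedTrainPath att side k bs ds → ∀ i < k, bs i ≠ b) :
    ∃ e : Bool,
      ∀ (k : ℕ) (bs : ℕ → B) (ds : ℕ → Bool) (k' : ℕ) (bs' : ℕ → B) (ds' : ℕ → Bool),
        EmanatesFrom att side b e k bs ds →
        EmanatesFrom att side b e k' bs' ds' →
        ∀ i < k, ∀ i' < k', bs i = bs' i' → ds i = ds' i' := by
  by_contra h
  push Not at h
  obtain ⟨_, _, _, _, _, _, hP, hQ, _, hi, _, hi', hbb, hdd⟩ := h false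
  obtain ⟨m, cs, fs, hL, hc0, hf0, hcm, hfm⟩ := hP.exists_loop hQ hi hi' hbb hdd
  obtain ⟨_, _, _, _, _, _, hP', hQ', _, hj, _, hj', hbb', hdd'⟩ := h true
  obtain ⟨m', cs', fs', hL', hc0', hf0', hcm', hfm'⟩ := hP'.exists_loop hQ' hj hj' hbb' hdd'
  have hglued := hL.overlapAppend hL' (hcm.trans hc0'.symm) (hfm.trans hf0'.symm)
  rw [show m + 2 + (m' + 2) - 1 = m + m' + 2 + 1 by omega] at hglued
  have hlast : m + 2 ≤ m + m' + 2 := by omega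
  have hindex : m + m' + 2 + 1 - (m + 2) = m' + 1 := by omega
  have hclosed := hglued.isClosedTrainPath_of_repeat (by omega)
    (by rw [overlapAppend_of_le hlast, hindex, overlapAppend_of_lt (by omega), hcm', hc0])
    (by rw [overlapAppend_of_le hlast, hindex, overlapAppend_of_lt (by omega), hfm', hf0]; rfl)
  exact hb _ _ _ hclosed 0 (by omega) (by rw [overlapAppend_of_lt (by omega), hc0])
end

section
/- Let a combinatorial train track be given. (a) For every closed train path γ = (b₁, …, b_k), the counting measure μ_γ : B → ℕ defined by μ_γ(b) = |{i : bᵢ = b}| satisfies the switch conditions; in particular μ_γ is a transverse measure that is positive on every branch traversed by γ. (b) Consequently, if b ∈ B is a branch such that every transverse measure μ satisfies μ(b) = 0 (an 'invisible' branch), then b is contained in no closed train path. (Lemma 4.2.) -/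
/-- The counting measure of a train path of length `k`: it assigns to each branch
the number of times the path traverses it. -/
noncomputable def countingMeasure {B : Type} [DecidableEq B]
    (k : ℕ) (bs : ℕ → B) : B → ℝ :=
  fun b => (((Finset.range k).filter fun i => bs i = b).card : ℝ)

open Finset

theorem sum_range_add_eq_zero_of_cyclic {M : Type*} [AddCommGroup M] {k : ℕ} (hk : 1 ≤ k)
    {f g : ℕ → M} (hstep : ∀ i, i + 1 < k → f (i + 1) = -g i) (hclose : f 0 = -g (k - 1)) :
    ∑ i ∈ range k, (f i + g i) = 0 := by
  obtain ⟨n, rfl⟩ : ∃ n, k = n + 1 := ⟨k - 1, by omega⟩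
  rw [sum_add_distrib, sum_range_succ' f, sum_range_succ g,
    sum_congr rfl fun i hi => hstep i (by simpa using hi), hclose, sum_neg_distrib]
  simp only [add_tsub_cancel_right]
  abel

section CountingMeasure

variable {B : Type} [DecidableEq B]

theorem sum_mul_countingMeasure [Fintype B] (k : ℕ) (bs : ℕ → B) (f : B → ℝ) :
    ∑ b, f b * countingMeasure k bs b = ∑ i ∈ range k, f (bs i) := by
  rw [← sum_fiberwise' (range k) bs f]
  refine sum_congr rfl fun b _ => ?_
  rw [sum_const, nsmul_eq_mul, countingMeasure, mul_comm]

theorem countingMeasure_nonneg (k : ℕ) (bs : ℕ → B) (b : B) : 0 ≤ countingMeasure k bs b :=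
  Nat.cast_nonneg _

theorem countingMeasure_pos {k : ℕ} {bs : ℕ → B} {b : B} (h : ∃ i < k, bs i = b) :
    0 < countingMeasure k bs b := by
  obtain ⟨i, hi, rfl⟩ := h
  exact Nat.cast_pos.mpr (card_pos.mpr ⟨i, mem_filter.mpr ⟨mem_range.mpr hi, rfl⟩⟩)

end CountingMeasure

section EndSign

variable {B S : Type} [DecidableEq S] (att : B × Bool → S) (side : B × Bool → Bool)

/-- The incidence matrix entry `L s b` is the sum of `endSign att side s (b, e)` over both ends. -/
def endSign (s : S) (e : B × Bool) : ℤ :=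
  if att e = s then (if side e then 1 else -1) else 0

variable {att side}

theorem endSign_eq_neg {a c : B × Bool} (hatt : att a = att c) (hside : side a ≠ side c)
    (s : S) : endSign att side s a = -endSign att side s c := by
  unfold endSign
  rw [hatt]
  split_ifs <;> simp_all

theorem sum_endSign_bool (s : S) (b : B) (d : Bool) :
    ∑ e : Bool, endSign att side s (b, e) =
      endSign att side s (b, d) + endSign att side s (b, !d) := by
  cases d <;> simp [add_comm]

theorem IsClosedTrainPath.sum_endSign_eq_zero {k : ℕ} {bs : ℕ → B} {ds : ℕ → Bool}
    (hγ : IsClosedTrainPath att side k bs ds) (s : S) :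
    ∑ i ∈ range k, ∑ e : Bool, endSign att side s (bs i, e) = 0 := by
  obtain ⟨⟨hk, hpath⟩, hatt, hside⟩ := hγ
  rw [sum_congr rfl fun i _ => sum_endSign_bool s (bs i) (ds i)]
  exact sum_range_add_eq_zero_of_cyclic hk
    (fun i hi => endSign_eq_neg (hpath i hi).1 (hpath i hi).2 s) (endSign_eq_neg hatt hside s)

end EndSign

/-- Lemma 4.2.
(a) For every closed train path `γ`, the counting measure `μ_γ` satisfies the
switch conditions (it lies in the kernel of the incidence matrix `L`); in
particular `μ_γ` is a transverse measure (nonnegative) which is strictly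
positive on every branch traversed by `γ`.
(b) Consequently, if `b` is an invisible branch (every transverse measure
vanishes on `b`), then `b` is contained in no closed train path. -/
theorem stmt_4 {B S : Type} [Fintype B] [DecidableEq B] [DecidableEq S]
    (att : B × Bool → S) (side : B × Bool → Bool)
    (L : S → B → ℤ)
    (hL : ∀ s b, L s b =
      ∑ e : Bool, (if att (b, e) = s then (if side (b, e) then (1 : ℤ) else -1) else 0)) :
    (∀ (k : ℕ) (bs : ℕ → B) (ds : ℕ → Bool),
      IsClosedTrainPath att side k bs ds →
        (∀ s, ∑ b, (L s b : ℝ) * countingMeasure k bs b = 0) ∧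
        (∀ b, 0 ≤ countingMeasure k bs b) ∧
        (∀ b, (∃ i < k, bs i = b) → 0 < countingMeasure k bs b)) ∧
    (∀ b : B,
      (∀ μ : B → ℝ, (∀ b', 0 ≤ μ b') → (∀ s, ∑ b', (L s b' : ℝ) * μ b' = 0) → μ b = 0) →
      ∀ (k : ℕ) (bs : ℕ → B) (ds : ℕ → Bool),
        IsClosedTrainPath att side k bs ds → ∀ i < k, bs i ≠ b) := by
  have hswitch : ∀ k bs ds, IsClosedTrainPath att side k bs ds →
      ∀ s, ∑ b, (L s b : ℝ) * countingMeasure k bs b = 0 := by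
    intro k bs ds hγ s
    have hrow : ∑ i ∈ range k, L s (bs i) = 0 := by
      rw [sum_congr rfl fun i _ => hL s (bs i)]
      exact hγ.sum_endSign_eq_zero s
    rw [sum_mul_countingMeasure]
    exact_mod_cast hrow
  refine ⟨fun k bs ds hγ =>
    ⟨hswitch k bs ds hγ, countingMeasure_nonneg k bs, fun _ => countingMeasure_pos⟩, ?_⟩
  intro b hinvisible k bs ds hγ i hi hbi
  exact (countingMeasure_pos ⟨i, hi, hbi⟩).ne'
    (hinvisible _ (countingMeasure_nonneg k bs) (hswitch k bs ds hγ))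
end

section
/- Let m, n ≥ 1 and let L : Matrix (Fin m) (Fin n) ℝ. Suppose the kernel of L contains no vector all of whose coordinates are strictly positive. Then there exists δ > 0 such that for every u : Fin n → ℝ with all coordinates strictly positive, ‖L.mulVec u‖ ≥ δ · min_{i} u(i), where ‖·‖ is the Euclidean norm on ℝ^m. -/
/-!
Since `ker L` misses the open positive orthant, Hahn–Banach separates the two (Gordan's
alternative): some `c ≥ 0` with `∑ c > 0` is orthogonal to `ker L`, hence lies in the row space,
`c = yᵀ L`. Then `(∑ c) · min u ≤ ⟪c, u⟫ = ⟪y, L u⟫ ≤ ‖y‖ ‖L u‖` by Cauchy–Schwarz.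
-/

open Matrix Finset

theorem Matrix.exists_vecMul_eq_of_forall_mulVec_eq_zero {K m n : Type*} [Field K] [Fintype m]
    [Fintype n] (L : Matrix m n K) (c : n → K) (hc : ∀ v, L *ᵥ v = 0 → c ⬝ᵥ v = 0) :
    ∃ y, y ᵥ* L = c := by
  classical
  have hc' : dotProductEquiv K n c ∈ (LinearMap.ker L.mulVecLin).dualAnnihilator :=
    (Submodule.mem_dualAnnihilator _).mpr hc
  rw [← LinearMap.range_dualMap_eq_dualAnnihilator_ker] at hc'
  obtain ⟨g, hg⟩ := hc'
  refine ⟨(dotProductEquiv K m).symm g, (dotProductEquiv K n).injective ?_⟩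
  refine LinearMap.ext fun v => ?_
  calc ((dotProductEquiv K m).symm g ᵥ* L) ⬝ᵥ v = (dotProductEquiv K m).symm g ⬝ᵥ L *ᵥ v :=
        (dotProduct_mulVec _ _ _).symm
    _ = L.mulVecLin.dualMap g v := by
        rw [LinearMap.dualMap_apply, ← dotProductEquiv_apply_apply, LinearEquiv.apply_symm_apply]
        rfl
    _ = c ⬝ᵥ v := by rw [hg]; rfl

theorem Submodule.exists_nonneg_dotProduct_eq_zero_of_forall_not_pos {ι : Type*} [Fintype ι]
    (V : Submodule ℝ (ι → ℝ)) (hV : ∀ v ∈ V, ¬ ∀ i, 0 < v i) :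
    ∃ c : ι → ℝ, 0 ≤ c ∧ 0 < ∑ i, c i ∧ ∀ v ∈ V, c ⬝ᵥ v = 0 := by
  classical
  set S : Set (ι → ℝ) := Set.univ.pi fun _ => Set.Ioi 0
  have hSV : Disjoint S V :=
    Set.disjoint_left.mpr fun v hvS hvV => hV v hvV (by simpa [S] using hvS)
  obtain ⟨f, u₀, hfS, hfV⟩ := geometric_hahn_banach_open (convex_pi fun _ _ => convex_Ioi 0)
    (isOpen_set_pi Set.finite_univ fun _ _ => isOpen_Ioi) V.convex hSV
  have hu₀ : u₀ ≤ 0 := by simpa using hfV 0 V.zero_mem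
  -- `f` is bounded below on the subspace `V`, so it vanishes there.
  have hfV_zero : ∀ v ∈ V, f v = 0 := by
    intro v hv
    by_contra hne
    have := hfV (((u₀ - 1) / f v) • v) (V.smul_mem _ hv)
    simp only [map_smul, smul_eq_mul, div_mul_cancel₀ _ hne] at this
    linarith
  have hf_closure : ∀ v ∈ closure S, f v ≤ 0 :=
    closure_minimal (fun v hv => (hfS v hv).le.trans hu₀)
      (isClosed_le f.continuous continuous_const)
  set c : ι → ℝ := -(dotProductEquiv ℝ ι).symm f.toLinearMap
  have hc : ∀ v, c ⬝ᵥ v = -f v := fun v => by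
    rw [neg_dotProduct, ← dotProductEquiv_apply_apply, LinearEquiv.apply_symm_apply]
    rfl
  refine ⟨c, fun i => ?_, ?_, fun v hv => by rw [hc, hfV_zero v hv, neg_zero]⟩
  · have hi : Pi.single i 1 ∈ closure S := by
      rw [closure_pi_set]
      simp only [closure_Ioi]
      exact fun j _ => (Pi.single_nonneg.mpr zero_le_one : (0 : ι → ℝ) ≤ Pi.single i 1) j
    simpa [c] using hf_closure _ hi
  · rw [← dotProduct_one, hc]
    linarith [hfS 1 fun _ _ => zero_lt_one' ℝ]

theorem sum_mul_inf'_le_dotProduct {ι R : Type*} [Fintype ι] [Semiring R] [LinearOrder R]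
    [IsOrderedRing R] (hι : (univ : Finset ι).Nonempty) {c : ι → R} (hc : 0 ≤ c) (u : ι → R) :
    (∑ i, c i) * univ.inf' hι u ≤ c ⬝ᵥ u :=
  calc (∑ i, c i) * univ.inf' hι u = c ⬝ᵥ fun _ => univ.inf' hι u := by
        simp [dotProduct, Finset.sum_mul]
    _ ≤ c ⬝ᵥ u := dotProduct_le_dotProduct_of_nonneg_left (fun i => inf'_le _ (mem_univ i)) hc

theorem stmt_6_general {m n : ℕ} (hn : 0 < n)
    (L : Matrix (Fin m) (Fin n) ℝ)
    (h : ¬ ∃ v : Fin n → ℝ, L.mulVec v = 0 ∧ ∀ i, 0 < v i) :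
    ∃ δ > (0 : ℝ), ∀ u : Fin n → ℝ, (∀ i, 0 < u i) →
      δ * (Finset.univ.inf' (Finset.univ_nonempty_iff.mpr ⟨⟨0, hn⟩⟩) u) ≤
        Real.sqrt (∑ s : Fin m, (L.mulVec u s) ^ 2) := by
  obtain ⟨c, hc, hc_sum, hc_ker⟩ :=
    (LinearMap.ker L.mulVecLin).exists_nonneg_dotProduct_eq_zero_of_forall_not_pos
      fun v hv hpos => h ⟨v, hv, hpos⟩
  obtain ⟨y, rfl⟩ := L.exists_vecMul_eq_of_forall_mulVec_eq_zero c hc_ker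
  refine ⟨(∑ i, (y ᵥ* L) i) / (√(∑ s, y s ^ 2) + 1), by positivity, fun u _ => ?_⟩
  rw [div_mul_eq_mul_div, div_le_iff₀ (by positivity)]
  calc (∑ i, (y ᵥ* L) i) * univ.inf' _ u ≤ (y ᵥ* L) ⬝ᵥ u := sum_mul_inf'_le_dotProduct _ hc u
    _ = y ⬝ᵥ L *ᵥ u := (dotProduct_mulVec _ _ _).symm
    _ ≤ √(∑ s, y s ^ 2) * √(∑ s, (L *ᵥ u) s ^ 2) := Real.sum_mul_le_sqrt_mul_sqrt _ _ _
    _ ≤ √(∑ s, (L *ᵥ u) s ^ 2) * (√(∑ s, y s ^ 2) + 1) := by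
        nlinarith [Real.sqrt_nonneg (∑ s, (L *ᵥ u) s ^ 2)]

/-- qualitative statement from the proof of Lemma 4.1 of
Masur–Minsky.  Let `L` be a real `m × n` matrix (`m, n ≥ 1`) whose kernel
contains no entrywise strictly positive vector.  Then there is `δ > 0` such that
for every entrywise strictly positive `u : Fin n → ℝ`,
`‖L.mulVec u‖ ≥ δ · min_i u i`, where `‖·‖` is the Euclidean norm on `ℝ^m`. -/
theorem stmt_6 {m n : ℕ} (hm : 0 < m) (hn : 0 < n)
    (L : Matrix (Fin m) (Fin n) ℝ)
    (h : ¬ ∃ v : Fin n → ℝ, L.mulVec v = 0 ∧ ∀ i, 0 < v i) :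
    ∃ δ > (0 : ℝ), ∀ u : Fin n → ℝ, (∀ i, 0 < u i) →
      δ * (Finset.univ.inf' (Finset.univ_nonempty_iff.mpr ⟨⟨0, hn⟩⟩) u) ≤
        Real.sqrt (∑ s : Fin m, (L.mulVec u s) ^ 2) :=
  stmt_6_general hn L h
end

section
/- Let G be a connected simple graph with vertex set V and graph metric dist_G, let N ∈ ℕ, and let A₀, …, A_N and B₀, …, B_N be subsets of V such that: (i) A_{j+1} ⊆ B_j for all 0 ≤ j < N, and (ii) for all 0 ≤ j ≤ N, every vertex at graph distance at most 1 from some vertex of B_j belongs to A_j. Suppose v_j ∈ A_j \ B_j for each 0 ≤ j ≤ N. Then dist_G(v_j, v_k) ≥ |j − k| for all 0 ≤ j, k ≤ N. -/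
/-!
Each `Bs j` contains the closed `1`-neighbourhood of `Bs (j + 1)`, because that lies in
`A (j + 1) ⊆ Bs j`. Hence, by induction on `n`, a vertex outside `Bs j` is at distance more than
`n` from every `w ∈ Bs (j + n)`: the neighbour of `w` on a geodesic lies in `Bs (j + n - 1)` and is
one step closer. Applied to `v k ∈ A k ⊆ Bs (k - 1)` this gives `k - j ≤ dist (v j) (v k)`.
-/

namespace SimpleGraph

variable {V : Type*} {G : SimpleGraph V}

lemma Reachable.exists_dist_le_of_dist_le_succ {x w : V} (h : G.Reachable w x) {n : ℕ}
    (hd : G.dist x w ≤ n + 1) : ∃ u, G.dist x u ≤ n ∧ G.dist u w ≤ 1 := by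
  obtain ⟨p, hp⟩ := h.exists_walk_length_eq_dist
  cases p with
  | nil => exact ⟨x, by simp, by simp⟩
  | cons hadj q =>
    refine ⟨_, ?_, (dist_eq_one_iff_adj.mpr hadj.symm).le⟩
    have hq := dist_le q
    rw [Walk.length_cons, dist_comm] at hp
    rw [dist_comm]
    omega

lemma Connected.lt_dist_of_thickening_subset (hG : G.Connected) {N : ℕ} {S : ℕ → Set V}
    (hS : ∀ m < N, ∀ u w, w ∈ S (m + 1) → G.dist u w ≤ 1 → u ∈ S m)
    {x : V} {j : ℕ} (hx : x ∉ S j) {n : ℕ} (hjn : j + n ≤ N) {w : V} (hw : w ∈ S (j + n)) :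
    n < G.dist x w := by
  induction n generalizing w with
  | zero => exact hG.pos_dist_of_ne fun hxw => hx (hxw ▸ hw)
  | succ n ih =>
    by_contra! hle
    obtain ⟨u, hxu, huw⟩ := (hG w x).exists_dist_le_of_dist_le_succ hle
    exact (ih (by omega) (hS (j + n) (by omega) u w hw huw)).not_ge hxu

end SimpleGraph

/-- abstract nesting argument from the proof of Theorem 1.1.
Let `G` be a connected simple graph with graph metric `G.dist`, let `N : ℕ`, and
let `A 0, …, A N` and `Bs 0, …, Bs N` be vertex subsets such that
(i) `A (j+1) ⊆ Bs j` for all `j < N`, and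
(ii) for all `j ≤ N`, every vertex at graph distance at most `1` from some vertex
of `Bs j` belongs to `A j`.
If `v j ∈ A j \ Bs j` for each `j ≤ N`, then `G.dist (v j) (v k) ≥ |j − k|`
for all `j, k ≤ N`. -/
theorem stmt_7 {V : Type} (G : SimpleGraph V) (hG : G.Connected) (N : ℕ)
    (A Bs : ℕ → Set V)
    (hnest : ∀ j < N, A (j + 1) ⊆ Bs j)
    (hnbhd : ∀ j ≤ N, ∀ v w : V, w ∈ Bs j → G.dist v w ≤ 1 → v ∈ A j)
    (v : ℕ → V) (hv : ∀ j ≤ N, v j ∈ A j \ Bs j) :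
    ∀ j ≤ N, ∀ k ≤ N, |(j : ℤ) - (k : ℤ)| ≤ (G.dist (v j) (v k) : ℤ) := by
  have hS : ∀ m < N, ∀ u w, w ∈ Bs (m + 1) → G.dist u w ≤ 1 → u ∈ Bs m :=
    fun m hm u w hw hd => hnest m hm (hnbhd (m + 1) hm u w hw hd)
  have sub_le_dist : ∀ j k, j ≤ k → k ≤ N → k - j ≤ G.dist (v j) (v k) := by
    intro j k hjk hk
    rcases hjk.eq_or_lt with rfl | hlt
    · simp
    obtain ⟨n, rfl⟩ := Nat.exists_eq_add_of_lt hlt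
    have := hG.lt_dist_of_thickening_subset hS (hv j (by omega)).2 (by omega)
      (hnest (j + n) (by omega) (hv _ hk).1)
    omega
  intro j hj k hk
  rw [abs_sub_le_iff]
  rcases le_total j k with h | h
  · have := sub_le_dist j k h hk
    constructor <;> omega
  · have := sub_le_dist k j h hj
    rw [SimpleGraph.dist_comm] at this
    constructor <;> omega
end

section
/- Let G be a connected simple graph with graph metric dist_G, let C ≥ 1 be a real number, let N ∈ ℕ, and let A₀, …, A_N, B₀, …, B_N be vertex subsets with A_{j+1} ⊆ B_j for all j < N and with every vertex at graph distance at most 1 from B_j lying in A_j for all j ≤ N. Suppose v_j ∈ A_j \ B_j for each j, and additionally dist_G(v_j, v_{j+1}) ≤ C for all j < N. Then |j − k| ≤ dist_G(v_j, v_k) ≤ C·|j − k| for all 0 ≤ j, k ≤ N; in particular the map j ↦ v_j is a C-quasi-isometric embedding of the integer interval {0, …, N} into G. -/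
/-!
The sets `A 0 ⊇ B 0 ⊇ A 1 ⊇ B 1 ⊇ ⋯` are nested with a margin: a neighbour of a vertex of
`A (i+1) ⊆ B i` lies in `A i`. Hence a walk of length `m` ending in `A k` starts in `A (k - m)`,
and if it starts outside `B j` then `A (k - m) ⊄ B j` forces `k - m ≤ j`, i.e. `m ≥ k - j`.
This gives `|j - k| ≤ dist (v j) (v k)`; the upper bound `C·|j - k|` is the triangle inequality
along the steps `v i, v (i+1)`.
-/

namespace SimpleGraph

variable {V : Type*} {G : SimpleGraph V}

structure IsEffectivelyNested (G : SimpleGraph V) (N : ℕ) (A B : ℕ → Set V) : Prop where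
  succ_subset : ∀ j < N, A (j + 1) ⊆ B j
  mem_of_dist_le_one : ∀ j ≤ N, ∀ v w : V, w ∈ B j → G.dist v w ≤ 1 → v ∈ A j

namespace IsEffectivelyNested

variable {N : ℕ} {A B : ℕ → Set V}

lemma inner_subset (h : G.IsEffectivelyNested N A B) {j : ℕ} (hj : j ≤ N) : B j ⊆ A j :=
  fun x hx => h.mem_of_dist_le_one j hj x x hx (by simp)

lemma mem_of_adj_of_mem_succ (h : G.IsEffectivelyNested N A B) {i : ℕ} (hi : i < N)
    {x y : V} (hxy : G.Adj x y) (hy : y ∈ A (i + 1)) : x ∈ A i :=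
  h.mem_of_dist_le_one i hi.le x y (h.succ_subset i hi hy) (dist_eq_one_iff_adj.2 hxy).le

lemma mem_of_walk (h : G.IsEffectivelyNested N A B) {x y : V} (p : G.Walk x y) {i : ℕ}
    (hiN : i + p.length ≤ N) (hy : y ∈ A (i + p.length)) : x ∈ A i := by
  induction p generalizing i with
  | nil => simpa using hy
  | cons hxz q ih =>
    rw [Walk.length_cons, ← add_assoc, add_right_comm] at hiN hy
    exact h.mem_of_adj_of_mem_succ (by omega) hxz (ih hiN hy)

lemma subset_of_lt (h : G.IsEffectivelyNested N A B) {i j : ℕ} (hji : j < i) (hiN : i ≤ N) :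
    A i ⊆ B j := by
  induction i, hji using Nat.le_induction with
  | base => exact h.succ_subset j hiN
  | succ i hji ih =>
    calc A (i + 1) ⊆ B i := h.succ_subset i hiN
      _ ⊆ A i := h.inner_subset (by omega)
      _ ⊆ B j := ih (by omega)

lemma sub_le_dist (h : G.IsEffectivelyNested N A B) (hG : G.Connected) {j k : ℕ} (hkN : k ≤ N)
    {x y : V} (hx : x ∉ B j) (hy : y ∈ A k) : k - j ≤ G.dist x y := by
  by_contra! hlt
  obtain ⟨p, hp⟩ := hG.exists_walk_length_eq_dist x y
  have hk : k - p.length + p.length = k := by omega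
  have hxA : x ∈ A (k - p.length) := h.mem_of_walk p (by omega) (by rwa [hk])
  exact hx (h.subset_of_lt (by omega) (by omega) hxA)

end IsEffectivelyNested

lemma Connected.dist_add_le_mul (hG : G.Connected) {N : ℕ} {C : ℝ} (v : ℕ → V)
    (hstep : ∀ j < N, (G.dist (v j) (v (j + 1)) : ℝ) ≤ C) (j n : ℕ) (hjn : j + n ≤ N) :
    (G.dist (v j) (v (j + n)) : ℝ) ≤ C * n := by
  induction n with
  | zero => simp
  | succ n ih =>
    have htri : (G.dist (v j) (v (j + n + 1)) : ℝ) ≤ G.dist (v j) (v (j + n)) +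
        G.dist (v (j + n)) (v (j + n + 1)) := mod_cast hG.dist_triangle
    have := ih (by omega)
    have := hstep (j + n) (by omega)
    rw [← add_assoc]
    push_cast
    linarith

lemma IsEffectivelyNested.abs_sub_le_dist_le_mul_abs_sub {N : ℕ} {A B : ℕ → Set V}
    (h : G.IsEffectivelyNested N A B) (hG : G.Connected) {C : ℝ}
    (v : ℕ → V) (hv : ∀ j ≤ N, v j ∈ A j \ B j)
    (hstep : ∀ j < N, (G.dist (v j) (v (j + 1)) : ℝ) ≤ C) {j k : ℕ} (hj : j ≤ N) (hk : k ≤ N) :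
    |(j : ℝ) - k| ≤ G.dist (v j) (v k) ∧ (G.dist (v j) (v k) : ℝ) ≤ C * |(j : ℝ) - k| := by
  wlog hjk : j ≤ k generalizing j k
  · rw [dist_comm, abs_sub_comm]
    exact this hk hj (by omega)
  obtain ⟨n, rfl⟩ := Nat.exists_eq_add_of_le hjk
  have habs : |(j : ℝ) - ↑(j + n)| = n := by push_cast; simp
  have hlower : n ≤ G.dist (v j) (v (j + n)) := by
    simpa using h.sub_le_dist hG hk (hv j hj).2 (hv (j + n) hk).1
  rw [habs]
  exact ⟨mod_cast hlower, hG.dist_add_le_mul v hstep j n hk⟩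

end SimpleGraph

/-- abstract core of Theorem 1.1.
Let `G` be a connected simple graph with graph metric `G.dist`, `C ≥ 1` a real
number, `N : ℕ`, and `A 0, …, A N`, `Bs 0, …, Bs N` vertex subsets with
`A (j+1) ⊆ Bs j` for `j < N` and with every vertex at graph distance at most `1`
from `Bs j` lying in `A j` for `j ≤ N`.  If `v j ∈ A j \ Bs j` for each `j ≤ N`
and moreover `G.dist (v j) (v (j+1)) ≤ C` for all `j < N`, then
`|j − k| ≤ G.dist (v j) (v k) ≤ C·|j − k|` for all `j, k ≤ N`; in particular
`j ↦ v j` is a `C`-quasi-isometric embedding of `{0, …, N}` into `G`. -/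
theorem stmt_8 {V : Type} (G : SimpleGraph V) (hG : G.Connected)
    (C : ℝ) (hC : 1 ≤ C) (N : ℕ)
    (A Bs : ℕ → Set V)
    (hnest : ∀ j < N, A (j + 1) ⊆ Bs j)
    (hnbhd : ∀ j ≤ N, ∀ v w : V, w ∈ Bs j → G.dist v w ≤ 1 → v ∈ A j)
    (v : ℕ → V) (hv : ∀ j ≤ N, v j ∈ A j \ Bs j)
    (hstep : ∀ j < N, (G.dist (v j) (v (j + 1)) : ℝ) ≤ C) :
    ∀ j ≤ N, ∀ k ≤ N,
      (|(j : ℝ) - (k : ℝ)| ≤ (G.dist (v j) (v k) : ℝ) ∧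
        (G.dist (v j) (v k) : ℝ) ≤ C * |(j : ℝ) - (k : ℝ)|) ∧
      ((1 / C) * |(j : ℝ) - (k : ℝ)| - C ≤ (G.dist (v j) (v k) : ℝ) ∧
        (G.dist (v j) (v k) : ℝ) ≤ C * |(j : ℝ) - (k : ℝ)| + C) := by
  intro j hj k hk
  have hnested : G.IsEffectivelyNested N A Bs := ⟨hnest, hnbhd⟩
  obtain ⟨hlower, hupper⟩ := hnested.abs_sub_le_dist_le_mul_abs_sub hG v hv hstep hj hk
  have hshrink : 1 / C * |(j : ℝ) - k| ≤ |(j : ℝ) - k| :=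
    mul_le_of_le_one_left (abs_nonneg _) ((div_le_one (by linarith)).2 hC)
  exact ⟨⟨hlower, hupper⟩, by linarith, by linarith⟩
end
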